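/- Let ε > 0 and define C₁ = sup{ ‖p‖_{[-1,1],∞} : p ∈ span{ζ_i : σ_i > ε}, ‖p‖_{m,∞} ≤ 1 }. Then the condition number of the (linear) operator Q_ε, namely κ = sup{ ‖Q_ε(q)‖_{[-1,1],∞} : q continuous on [-1,1], ‖q‖_{m,∞} ≤ 1 }, satisfies C₁ ≤ κ ≤ √(m+1)·C₁. -/

import Mathlib

open MeasureTheory Finset

noncomputable section

/-- The equispaced node `x_k = -1 + 2k/m` in `[-1,1]`. -/
def node (m k : ℕ) : ℝ := -1 + 2 * (k : ℝ) / (m : ℝ)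

/-- The discrete semi-inner product `⟨f,g⟩_{m,2} = (2/(m+1)) Σ_{k=0}^m f(x_k) conj(g(x_k))`. -/
def discInner (m : ℕ) (f g : ℝ → ℂ) : ℂ :=
  (2 / ((m : ℂ) + 1)) * ∑ k ∈ Finset.range (m + 1), f (node m k) * (starRingEnd ℂ) (g (node m k))

/-- The discrete `ℓ²` semi-norm `‖f‖_{m,2}`. -/
def discNorm (m : ℕ) (f : ℝ → ℂ) : ℝ :=
  Real.sqrt ((2 / ((m : ℝ) + 1)) * ∑ k ∈ Finset.range (m + 1), ‖f (node m k)‖ ^ 2)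

/-- The discrete sup semi-norm `‖f‖_{m,∞} = max_{0 ≤ k ≤ m} |f(x_k)|`. -/
def discSup (m : ℕ) (f : ℝ → ℂ) : ℝ :=
  ⨆ k : Fin (m + 1), ‖f (node m (k : ℕ))‖

/-- The uniform norm `‖f‖_{I,∞} = sup_{x ∈ I} |f(x)|`. -/
def supNorm (I : Set ℝ) (f : ℝ → ℂ) : ℝ :=
  ⨆ x : I, ‖f (x : ℝ)‖

/-- The Jacobi-type weight `w_γ^{(α,β)}(x) = (1 - x/γ)^α (1 + x/γ)^β`. -/
def jweight (α β γ x : ℝ) : ℝ := (1 - x / γ) ^ α * (1 + x / γ) ^ β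

/-- The weighted `L²` inner product `⟨f,g⟩_w = ∫_{-γ}^{γ} f conj(g) w_γ^{(α,β)}`. -/
def wInner (α β γ : ℝ) (f g : ℝ → ℂ) : ℂ :=
  ∫ x in (-γ)..γ, f x * (starRingEnd ℂ) (g x) * ((jweight α β γ x : ℝ) : ℂ)

/-- The weighted `L²` norm `‖f‖_w`. -/
def wNorm (α β γ : ℝ) (f : ℝ → ℂ) : ℝ :=
  Real.sqrt (∫ x in (-γ)..γ, ‖f x‖ ^ 2 * jweight α β γ x)

/-- `h₀^{(α,β)} = 2^{α+β+1} Γ(α+1) Γ(β+1) / ((α+β+1) Γ(α+β+1))`. -/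
def h0 (α β : ℝ) : ℝ :=
  2 ^ (α + β + 1) * Real.Gamma (α + 1) * Real.Gamma (β + 1) /
    ((α + β + 1) * Real.Gamma (α + β + 1))

/-- A complex polynomial regarded as a function of a real variable. -/
def pf (p : Polynomial ℂ) : ℝ → ℂ := fun x => p.eval (x : ℂ)

/-- The constant `c_{n,γ,α,β} = max_{x ∈ [-γ,γ]} (Σ_{i=0}^n |φ_i(x)|²)^{1/2}`. -/
def cConst (n : ℕ) (γ : ℝ) (φ : ℕ → Polynomial ℂ) : ℝ :=
  ⨆ x : Set.Icc (-γ) γ,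
    Real.sqrt (∑ i ∈ Finset.range (n + 1), ‖pf (φ i) (x : ℝ)‖ ^ 2)

/-- The regularized frame approximation operator
`Q_δ(f) = Σ_{i : σ_i > δ} σ_i^{-2} ⟨f,ζ_i⟩_{m,2} ζ_i`. -/
def Qop (m n : ℕ) (ζ : Fin (n + 1) → Polynomial ℂ) (σ : Fin (n + 1) → ℝ) (δ : ℝ)
    (f : ℝ → ℂ) : ℝ → ℂ :=
  fun x => ∑ i ∈ Finset.univ.filter (fun i : Fin (n + 1) => δ < σ i),
    (discInner m f (pf (ζ i)) / ((σ i ^ 2 : ℝ) : ℂ)) * pf (ζ i) x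

/-- The quantity `C(m,n,γ,δ) = sup{‖p‖_{[-1,1],∞} : p ∈ P_n, ‖p‖_{m,∞} ≤ 1,
‖p‖_{[-γ,γ],∞} ≤ δ⁻¹}`. -/
def Cquant (m n : ℕ) (γ δ : ℝ) : ℝ :=
  sSup {r : ℝ | ∃ p : Polynomial ℂ, p.natDegree ≤ n ∧ discSup m (pf p) ≤ 1 ∧
    supNorm (Set.Icc (-γ) γ) (pf p) ≤ δ⁻¹ ∧ r = supNorm (Set.Icc (-1) 1) (pf p)}

/-- The constant `C₁ = sup{‖p‖_{[-1,1],∞} : p ∈ span{ζ_i : σ_i > ε}, ‖p‖_{m,∞} ≤ 1}`. -/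
def C1const (m n : ℕ) (ζ : Fin (n + 1) → Polynomial ℂ) (σ : Fin (n + 1) → ℝ) (ε : ℝ) : ℝ :=
  sSup {r : ℝ | ∃ p : Polynomial ℂ, p ∈ Submodule.span ℂ (ζ '' {i | ε < σ i}) ∧
    discSup m (pf p) ≤ 1 ∧ r = supNorm (Set.Icc (-1) 1) (pf p)}

/-- The constant `C₂ = sup{‖p - Q_ε(p)‖_{[-1,1],∞} : p ∈ P_n, ‖p‖_{[-γ,γ],∞} ≤ ε⁻¹}`. -/
def C2const (m n : ℕ) (γ : ℝ) (ζ : Fin (n + 1) → Polynomial ℂ) (σ : Fin (n + 1) → ℝ)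
    (ε : ℝ) : ℝ :=
  sSup {r : ℝ | ∃ p : Polynomial ℂ, p.natDegree ≤ n ∧
    supNorm (Set.Icc (-γ) γ) (pf p) ≤ ε⁻¹ ∧
    r = supNorm (Set.Icc (-1) 1) (fun x => pf p x - Qop m n ζ σ ε (pf p) x)}

/-- The condition number `κ(Q_δ) = sup{‖Q_δ(q)‖_{[-1,1],∞} : q ∈ C([-1,1]), ‖q‖_{m,∞} ≤ 1}`. -/
def kappa (m n : ℕ) (ζ : Fin (n + 1) → Polynomial ℂ) (σ : Fin (n + 1) → ℝ) (δ : ℝ) : ℝ :=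
  sSup {r : ℝ | ∃ q : ℝ → ℂ, ContinuousOn q (Set.Icc (-1) 1) ∧ discSup m q ≤ 1 ∧
    r = supNorm (Set.Icc (-1) 1) (Qop m n ζ σ δ q)}

/-- The Bernstein ellipse `E_θ = {(z + z⁻¹)/2 : 1 ≤ |z| ≤ θ}`. -/
def bernsteinEllipse (θ : ℝ) : Set ℂ :=
  {w | ∃ z : ℂ, 1 ≤ ‖z‖ ∧ ‖z‖ ≤ θ ∧ w = (z + z⁻¹) / 2}

/-- The uniform norm on a subset of `ℂ`. -/
def supNormC (E : Set ℂ) (f : ℂ → ℂ) : ℝ :=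
  ⨆ z : E, ‖f (z : ℂ)‖

/-- The `C^k` norm `‖f‖_{C^k([-1,1])} = max_{0 ≤ j ≤ k} ‖f^{(j)}‖_{[-1,1],∞}`. -/
def CkNorm (k : ℕ) (f : ℝ → ℂ) : ℝ :=
  ⨆ j : Fin (k + 1), supNorm (Set.Icc (-1) 1) (iteratedDerivWithin (j : ℕ) f (Set.Icc (-1) 1))

/-!
On the nodes, `Q_ε` is the orthogonal projection, for the discrete inner product
`⟨·,·⟩_{m,2}`, onto `span {ζ_i : σ_i > ε}`; hence it does not increase `‖·‖_{m,2}`, and comparing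
`‖·‖_{m,2}` with `‖·‖_{m,∞}` costs `√2` one way and `√((m+1)/2)` the other. So
`Q_ε q / √(m+1)` is admissible in the definition of `C₁`, which gives `κ ≤ √(m+1) C₁`.
Conversely `Q_ε` reproduces every `p` in that span, which gives `C₁ ≤ κ`.
-/

theorem Orthonormal.norm_sum_inner_smul_le {𝕜 E ι : Type*} [RCLike 𝕜] [NormedAddCommGroup E]
    [InnerProductSpace 𝕜 E] {v : ι → E} (hv : Orthonormal 𝕜 v) (s : Finset ι) (x : E) :
    ‖∑ i ∈ s, inner 𝕜 (v i) x • v i‖ ≤ ‖x‖ := by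
  refine pow_le_pow_iff_left₀ (norm_nonneg _) (norm_nonneg _) two_ne_zero |>.mp ?_
  calc ‖∑ i ∈ s, inner 𝕜 (v i) x • v i‖ ^ 2 = ∑ i ∈ s, ‖inner 𝕜 (v i) x‖ ^ 2 := by
        rw [@norm_sq_eq_re_inner 𝕜, hv.inner_sum, map_sum]
        refine sum_congr rfl fun i _ => ?_
        rw [RCLike.conj_mul, ← RCLike.ofReal_pow, RCLike.ofReal_re]
    _ ≤ ‖x‖ ^ 2 := hv.sum_inner_products_le x

theorem continuous_pf (p : Polynomial ℂ) : Continuous (pf p) :=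
  p.continuous.comp Complex.continuous_ofReal

theorem pf_add (p q : Polynomial ℂ) : pf (p + q) = pf p + pf q := by
  funext x; simp [pf]

theorem pf_smul (c : ℂ) (p : Polynomial ℂ) : pf (c • p) = c • pf p := by
  funext x; simp [pf]

theorem supNorm_const_mul (I : Set ℝ) (c : ℂ) (f : ℝ → ℂ) :
    supNorm I (fun x => c * f x) = ‖c‖ * supNorm I f := by
  simp only [supNorm, norm_mul, Real.mul_iSup_of_nonneg (norm_nonneg c)]

section Sampling

variable (m : ℕ)

theorem discSup_const_mul (c : ℂ) (f : ℝ → ℂ) :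
    discSup m (fun x => c * f x) = ‖c‖ * discSup m f := by
  simp only [discSup, norm_mul, Real.mul_iSup_of_nonneg (norm_nonneg c)]

theorem norm_le_discSup (f : ℝ → ℂ) (k : Fin (m + 1)) : ‖f (node m k)‖ ≤ discSup m f :=
  le_ciSup (f := fun j : Fin (m + 1) => ‖f (node m j)‖) (Finite.bddAbove_range _) k

theorem discSup_nonneg (f : ℝ → ℂ) : 0 ≤ discSup m f :=
  (norm_nonneg _).trans (norm_le_discSup m f 0)

theorem discNorm_le_sqrt_two_mul_discSup (f : ℝ → ℂ) :
    discNorm m f ≤ Real.sqrt 2 * discSup m f := by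
  rw [discNorm, ← Real.sqrt_sq (discSup_nonneg m f), ← Real.sqrt_mul zero_le_two]
  refine Real.sqrt_le_sqrt ?_
  have hsum : ∑ k ∈ range (m + 1), ‖f (node m k)‖ ^ 2 ≤ (m + 1) * discSup m f ^ 2 := by
    simpa using sum_le_card_nsmul (range (m + 1)) (fun k => ‖f (node m k)‖ ^ 2) _ fun k hk =>
      pow_le_pow_left₀ (norm_nonneg _) (norm_le_discSup m f ⟨k, mem_range.mp hk⟩) 2
  calc 2 / ((m : ℝ) + 1) * ∑ k ∈ range (m + 1), ‖f (node m k)‖ ^ 2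
      ≤ 2 / ((m : ℝ) + 1) * ((m + 1) * discSup m f ^ 2) := by gcongr
    _ = 2 * discSup m f ^ 2 := by field_simp

theorem discSup_le_sqrt_mul_discNorm (f : ℝ → ℂ) :
    discSup m f ≤ Real.sqrt (((m : ℝ) + 1) / 2) * discNorm m f := by
  refine ciSup_le fun k => ?_
  rw [discNorm, ← Real.sqrt_mul (by positivity), ← mul_assoc,
    div_mul_div_cancel₀ two_ne_zero, div_self (by positivity), one_mul]
  exact Real.le_sqrt_of_sq_le <|
    single_le_sum (fun j _ => sq_nonneg ‖f (node m j)‖) (mem_range.mpr k.isLt)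

/-- Scaled so that the Euclidean inner product is the discrete one. -/
def sampleVec (f : ℝ → ℂ) : EuclideanSpace ℂ (Fin (m + 1)) :=
  WithLp.toLp 2 fun k => (Real.sqrt (2 / ((m : ℝ) + 1)) : ℂ) * f (node m k)

theorem inner_sampleVec (f g : ℝ → ℂ) :
    inner ℂ (sampleVec m f) (sampleVec m g) = discInner m g f := by
  have hc : (Real.sqrt (2 / ((m : ℝ) + 1)) : ℂ) * (Real.sqrt (2 / ((m : ℝ) + 1)) : ℂ) =
      2 / ((m : ℂ) + 1) := by
    rw [← Complex.ofReal_mul, Real.mul_self_sqrt (by positivity)]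
    push_cast; ring
  simp only [sampleVec, PiLp.inner_apply, RCLike.inner_apply, map_mul, Complex.conj_ofReal,
    discInner, mul_sum, ← hc]
  rw [← Fin.sum_univ_eq_sum_range (fun k => _ * (g (node m k) * _))]
  exact sum_congr rfl fun k _ => by ring

theorem norm_sampleVec (f : ℝ → ℂ) : ‖sampleVec m f‖ = discNorm m f := by
  rw [EuclideanSpace.norm_eq, discNorm, mul_sum,
    ← Fin.sum_univ_eq_sum_range (fun k => _ * ‖f (node m k)‖ ^ 2)]
  congr 1
  refine sum_congr rfl fun k _ => ?_
  simp only [sampleVec, norm_mul, Complex.norm_real, Real.norm_of_nonneg (Real.sqrt_nonneg _),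
    mul_pow, Real.sq_sqrt (by positivity : (0 : ℝ) ≤ 2 / ((m : ℝ) + 1))]

theorem norm_discInner_le (f g : ℝ → ℂ) :
    ‖discInner m f g‖ ≤ discNorm m f * discNorm m g := by
  rw [← inner_sampleVec, ← norm_sampleVec, ← norm_sampleVec, mul_comm]
  exact norm_inner_le_norm _ _

theorem discInner_add_left (f g h : ℝ → ℂ) :
    discInner m (f + g) h = discInner m f h + discInner m g h := by
  simp only [discInner, Pi.add_apply, add_mul, sum_add_distrib, mul_add]

theorem discInner_smul_left (c : ℂ) (f h : ℝ → ℂ) :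
    discInner m (c • f) h = c * discInner m f h := by
  simp only [discInner, Pi.smul_apply, smul_eq_mul, mul_sum]
  exact sum_congr rfl fun k _ => by ring

end Sampling

section Frame

variable (m n : ℕ) (ζ : Fin (n + 1) → Polynomial ℂ) (σ : Fin (n + 1) → ℝ) (δ : ℝ)

def DiscreteOrthogonal : Prop :=
  ∀ i j, discInner m (pf (ζ i)) (pf (ζ j)) = if i = j then ((σ i ^ 2 : ℝ) : ℂ) else 0

def Qpoly (q : ℝ → ℂ) : Polynomial ℂ :=
  ∑ i ∈ univ.filter (fun i => δ < σ i), (discInner m q (pf (ζ i)) / ((σ i ^ 2 : ℝ) : ℂ)) • ζ i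

theorem pf_Qpoly (q : ℝ → ℂ) : pf (Qpoly m n ζ σ δ q) = Qop m n ζ σ δ q := by
  funext x
  simp [Qpoly, Qop, pf, Polynomial.eval_finsetSum]

theorem Qpoly_mem_span (q : ℝ → ℂ) :
    Qpoly m n ζ σ δ q ∈ Submodule.span ℂ (ζ '' {i | δ < σ i}) :=
  Submodule.sum_mem _ fun i hi =>
    Submodule.smul_mem _ _ (Submodule.subset_span ⟨i, (mem_filter.mp hi).2, rfl⟩)

theorem Qop_add (f g : ℝ → ℂ) : Qop m n ζ σ δ (f + g) = Qop m n ζ σ δ f + Qop m n ζ σ δ g := by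
  funext x
  simp only [Qop, Pi.add_apply, discInner_add_left, add_div, add_mul, sum_add_distrib]

theorem Qop_smul (c : ℂ) (f : ℝ → ℂ) : Qop m n ζ σ δ (c • f) = c • Qop m n ζ σ δ f := by
  funext x
  simp only [Qop, Pi.smul_apply, smul_eq_mul, discInner_smul_left, mul_sum]
  exact sum_congr rfl fun i _ => by ring

variable {m n ζ σ δ}

theorem Qop_pf_self (hσ : ∀ i, σ i ≠ 0) (hζ : DiscreteOrthogonal m n ζ σ) {j : Fin (n + 1)}
    (hj : δ < σ j) : Qop m n ζ σ δ (pf (ζ j)) = pf (ζ j) := by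
  funext x
  rw [Qop, sum_eq_single_of_mem j (by simpa using hj)]
  · rw [hζ j j, if_pos rfl, div_self (by exact_mod_cast pow_ne_zero 2 (hσ j)), one_mul]
  · intro i _ hij
    rw [hζ j i, if_neg (Ne.symm hij), zero_div, zero_mul]

theorem Qop_pf_of_mem_span (hσ : ∀ i, σ i ≠ 0) (hζ : DiscreteOrthogonal m n ζ σ)
    {p : Polynomial ℂ} (hp : p ∈ Submodule.span ℂ (ζ '' {i | δ < σ i})) :
    Qop m n ζ σ δ (pf p) = pf p := by
  induction hp using Submodule.span_induction with
  | mem _ h =>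
    obtain ⟨j, hj, rfl⟩ := h
    exact Qop_pf_self hσ hζ hj
  | zero =>
    rw [show pf 0 = 0 from funext fun _ => Polynomial.eval_zero]
    simpa using Qop_smul m n ζ σ δ 0 0
  | add p q _ _ hp hq => rw [pf_add, Qop_add, hp, hq]
  | smul c p _ hp => rw [pf_smul, Qop_smul, hp]

variable (m ζ σ)

def frameVec (i : Fin (n + 1)) : EuclideanSpace ℂ (Fin (m + 1)) :=
  (((σ i)⁻¹ : ℝ) : ℂ) • sampleVec m (pf (ζ i))

variable {m ζ σ}

theorem orthonormal_frameVec (hσ : ∀ i, σ i ≠ 0) (hζ : DiscreteOrthogonal m n ζ σ) :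
    Orthonormal ℂ (frameVec m ζ σ) := by
  rw [orthonormal_iff_ite]
  intro i j
  simp only [frameVec, inner_smul_left, inner_smul_right, Complex.conj_ofReal, inner_sampleVec,
    hζ j i]
  by_cases h : i = j
  · subst h
    rw [if_pos rfl, if_pos rfl]
    have : ((σ i : ℝ) : ℂ) ≠ 0 := by exact_mod_cast hσ i
    push_cast
    field_simp
  · simp [h, Ne.symm h]

theorem sampleVec_Qop (q : ℝ → ℂ) :
    sampleVec m (Qop m n ζ σ δ q) = ∑ i ∈ univ.filter (fun i => δ < σ i),
      inner ℂ (frameVec m ζ σ i) (sampleVec m q) • frameVec m ζ σ i := by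
  have hcoeff : ∀ i, inner ℂ (frameVec m ζ σ i) (sampleVec m q) =
      (((σ i)⁻¹ : ℝ) : ℂ) * discInner m q (pf (ζ i)) := fun i => by
    rw [frameVec, inner_smul_left, inner_sampleVec, Complex.conj_ofReal]
  ext k
  simp only [hcoeff]
  simp only [sampleVec, Qop, frameVec, WithLp.ofLp_sum, WithLp.ofLp_smul,
    Finset.sum_apply, Pi.smul_apply, smul_eq_mul, mul_sum]
  refine sum_congr rfl fun i _ => ?_
  push_cast
  ring

theorem discNorm_Qop_le (hσ : ∀ i, σ i ≠ 0) (hζ : DiscreteOrthogonal m n ζ σ) (q : ℝ → ℂ) :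
    discNorm m (Qop m n ζ σ δ q) ≤ discNorm m q := by
  rw [← norm_sampleVec, ← norm_sampleVec, sampleVec_Qop]
  exact (orthonormal_frameVec hσ hζ).norm_sum_inner_smul_le _ _

theorem discSup_Qop_le (hσ : ∀ i, σ i ≠ 0) (hζ : DiscreteOrthogonal m n ζ σ) (q : ℝ → ℂ) :
    discSup m (Qop m n ζ σ δ q) ≤ Real.sqrt ((m : ℝ) + 1) * discSup m q :=
  calc discSup m (Qop m n ζ σ δ q)
      ≤ Real.sqrt (((m : ℝ) + 1) / 2) * discNorm m (Qop m n ζ σ δ q) :=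
        discSup_le_sqrt_mul_discNorm m _
    _ ≤ Real.sqrt (((m : ℝ) + 1) / 2) * (Real.sqrt 2 * discSup m q) := by
        gcongr
        exact (discNorm_Qop_le hσ hζ q).trans (discNorm_le_sqrt_two_mul_discSup m q)
    _ = Real.sqrt ((m : ℝ) + 1) * discSup m q := by
        rw [← mul_assoc, ← Real.sqrt_mul (by positivity), div_mul_cancel₀ _ two_ne_zero]

theorem exists_norm_Qop_le {K : Set ℝ} (hK : IsCompact K) :
    ∃ B, ∀ q, discSup m q ≤ 1 → ∀ x ∈ K, ‖Qop m n ζ σ δ q x‖ ≤ B := by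
  choose M hM using fun i => hK.exists_bound_of_continuousOn (continuous_pf (ζ i)).continuousOn
  refine ⟨∑ i ∈ univ.filter (fun i => δ < σ i),
    Real.sqrt 2 * discNorm m (pf (ζ i)) / σ i ^ 2 * M i, fun q hq x hx => ?_⟩
  refine (norm_sum_le _ _).trans (sum_le_sum fun i _ => ?_)
  have hcoeff : ‖discInner m q (pf (ζ i))‖ ≤ Real.sqrt 2 * discNorm m (pf (ζ i)) :=
    calc ‖discInner m q (pf (ζ i))‖ ≤ discNorm m q * discNorm m (pf (ζ i)) :=
          norm_discInner_le m _ _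
      _ ≤ Real.sqrt 2 * discNorm m (pf (ζ i)) := by
          refine mul_le_mul_of_nonneg_right ?_ (Real.sqrt_nonneg _)
          exact (discNorm_le_sqrt_two_mul_discSup m q).trans
            (mul_le_of_le_one_right (Real.sqrt_nonneg 2) hq)
  rw [norm_mul, norm_div, Complex.norm_real, Real.norm_of_nonneg (sq_nonneg _)]
  exact mul_le_mul (div_le_div_of_nonneg_right hcoeff (sq_nonneg _)) (hM i x hx) (norm_nonneg _)
    (div_nonneg (mul_nonneg (Real.sqrt_nonneg _) (Real.sqrt_nonneg _)) (sq_nonneg _))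

end Frame

section Constants

variable (m n : ℕ) (ζ : Fin (n + 1) → Polynomial ℂ) (σ : Fin (n + 1) → ℝ) (δ : ℝ)

def c1Set : Set ℝ :=
  {r | ∃ p : Polynomial ℂ, p ∈ Submodule.span ℂ (ζ '' {i | δ < σ i}) ∧
    discSup m (pf p) ≤ 1 ∧ r = supNorm (Set.Icc (-1) 1) (pf p)}

def kappaSet : Set ℝ :=
  {r | ∃ q : ℝ → ℂ, ContinuousOn q (Set.Icc (-1) 1) ∧ discSup m q ≤ 1 ∧
    r = supNorm (Set.Icc (-1) 1) (Qop m n ζ σ δ q)}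

theorem c1Set_nonempty : (c1Set m n ζ σ δ).Nonempty :=
  ⟨_, 0, Submodule.zero_mem _, by simp [discSup, pf], rfl⟩

theorem bddAbove_kappaSet : BddAbove (kappaSet m n ζ σ δ) := by
  obtain ⟨B, hB⟩ := exists_norm_Qop_le (m := m) (ζ := ζ) (σ := σ) (δ := δ) isCompact_Icc
  have := Set.nonempty_Icc_subtype (show (-1 : ℝ) ≤ 1 by norm_num)
  exact ⟨B, by rintro _ ⟨q, -, hq, rfl⟩; exact ciSup_le fun x => hB q hq x x.2⟩

variable {m n ζ σ δ}

theorem c1Set_subset_kappaSet (hσ : ∀ i, σ i ≠ 0) (hζ : DiscreteOrthogonal m n ζ σ) :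
    c1Set m n ζ σ δ ⊆ kappaSet m n ζ σ δ := by
  rintro _ ⟨p, hp, hp1, rfl⟩
  exact ⟨pf p, (continuous_pf p).continuousOn, hp1, by rw [Qop_pf_of_mem_span hσ hζ hp]⟩

theorem C1const_le_kappa (hσ : ∀ i, σ i ≠ 0) (hζ : DiscreteOrthogonal m n ζ σ) :
    C1const m n ζ σ δ ≤ kappa m n ζ σ δ :=
  csSup_le_csSup (bddAbove_kappaSet ..) (c1Set_nonempty ..) (c1Set_subset_kappaSet hσ hζ)

theorem kappa_le_sqrt_mul_C1const (hσ : ∀ i, σ i ≠ 0) (hζ : DiscreteOrthogonal m n ζ σ) :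
    kappa m n ζ σ δ ≤ Real.sqrt ((m : ℝ) + 1) * C1const m n ζ σ δ := by
  have hs : 0 < Real.sqrt ((m : ℝ) + 1) := by positivity
  refine csSup_le ((c1Set_nonempty ..).mono (c1Set_subset_kappaSet hσ hζ)) ?_
  rintro _ ⟨q, -, hq, rfl⟩
  set c : ℂ := (((Real.sqrt ((m : ℝ) + 1))⁻¹ : ℝ) : ℂ)
  have hc : ‖c‖ = (Real.sqrt ((m : ℝ) + 1))⁻¹ := by
    rw [Complex.norm_real, Real.norm_of_nonneg (inv_nonneg.mpr hs.le)]
  have hpf : pf (c • Qpoly m n ζ σ δ q) = fun x => c * Qop m n ζ σ δ q x := by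
    rw [pf_smul, pf_Qpoly]
    rfl
  have hmem : supNorm (Set.Icc (-1) 1) (pf (c • Qpoly m n ζ σ δ q)) ∈ c1Set m n ζ σ δ := by
    refine ⟨_, Submodule.smul_mem _ _ (Qpoly_mem_span m n ζ σ δ q), ?_, rfl⟩
    rw [hpf, discSup_const_mul, hc, inv_mul_le_iff₀ hs, mul_one]
    exact (discSup_Qop_le hσ hζ q).trans (mul_le_of_le_one_right hs.le hq)
  calc supNorm (Set.Icc (-1) 1) (Qop m n ζ σ δ q)
      = Real.sqrt ((m : ℝ) + 1) * supNorm (Set.Icc (-1) 1) (pf (c • Qpoly m n ζ σ δ q)) := by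
        rw [hpf, supNorm_const_mul, hc, mul_inv_cancel_left₀ hs.ne']
    _ ≤ Real.sqrt ((m : ℝ) + 1) * C1const m n ζ σ δ := by
        gcongr
        exact le_csSup ((bddAbove_kappaSet ..).mono (c1Set_subset_kappaSet hσ hζ)) hmem

end Constants

theorem stmt6_general
    (m n : ℕ)
    (ζ : Fin (n + 1) → Polynomial ℂ) (σ : Fin (n + 1) → ℝ) (hσ : ∀ i, 0 < σ i)
    (hζd : ∀ i j, discInner m (pf (ζ i)) (pf (ζ j)) =
      if i = j then (((σ i) ^ 2 : ℝ) : ℂ) else 0)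
    (ε : ℝ) :
    C1const m n ζ σ ε ≤ kappa m n ζ σ ε ∧
    kappa m n ζ σ ε ≤ Real.sqrt ((m : ℝ) + 1) * C1const m n ζ σ ε := by
  have hσ₀ : ∀ i, σ i ≠ 0 := fun i => (hσ i).ne'
  exact ⟨C1const_le_kappa hσ₀ hζd, kappa_le_sqrt_mul_C1const hσ₀ hζd⟩

/-- the condition number of `Q_ε` satisfies `C₁ ≤ κ ≤ √(m+1) C₁`. -/
theorem stmt6 (α β γ : ℝ) (hα : -1 < α) (hβ : -1 < β) (hγ : 1 < γ)
    (m n : ℕ) (hn : 1 ≤ n) (hmn : n ≤ m)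
    (ζ : Fin (n + 1) → Polynomial ℂ) (σ : Fin (n + 1) → ℝ) (hσ : ∀ i, 0 < σ i)
    (hζdeg : ∀ i, (ζ i).natDegree ≤ n)
    (hζspan : ∀ p : Polynomial ℂ, p.natDegree ≤ n → p ∈ Submodule.span ℂ (Set.range ζ))
    (hζw : ∀ i j, wInner α β γ (pf (ζ i)) (pf (ζ j)) = if i = j then 1 else 0)
    (hζd : ∀ i j, discInner m (pf (ζ i)) (pf (ζ j)) =
      if i = j then (((σ i) ^ 2 : ℝ) : ℂ) else 0)
    (ε : ℝ) (hε : 0 < ε) :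
    C1const m n ζ σ ε ≤ kappa m n ζ σ ε ∧
    kappa m n ζ σ ε ≤ Real.sqrt ((m : ℝ) + 1) * C1const m n ζ σ ε :=
  stmt6_general m n ζ σ hσ hζd ε
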